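/- For every point q = (B,i,j) of the quiver representation space 𝕄 and every ξ ∈ ℂ, the hyperkähler rotation HK_ξ(q) satisfies, at every vertex k: μ_ℝ(HK_ξ(q))_k = (1 − |ξ|²)·μ_ℝ(q)_k − i·conj(ξ)·μ_ℂ(q)_k − i·ξ·(μ_ℂ(q)_k)†. -/

import Mathlib

open Matrix Filter Topology

namespace QuiverCL

noncomputable section

variable {n : ℕ} {E : Type*}

/-- Cast a matrix along equalities of vertices. -/
def castM2 (v : Fin n → ℕ) {a b a' b' : Fin n} (ea : a = a') (eb : b = b')
    (M : Matrix (Fin (v a)) (Fin (v b)) ℂ) : Matrix (Fin (v a')) (Fin (v b')) ℂ :=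
  Matrix.reindex (finCongr (congrArg v ea)) (finCongr (congrArg v eb)) M

/-- The quiver representation space `𝕄`: a triple `(B, i, j)` of families of matrices,
`B h : V (src h) → V (tgt h)`, `i k : W k → V k`, `j k : V k → W k`
(matrices act on column vectors, so `Hom(V_a, V_b)` is `Matrix (Fin (v b)) (Fin (v a)) ℂ`). -/
abbrev Rep (src tgt : E → Fin n) (v w : Fin n → ℕ) : Type _ :=
  (∀ h : E, Matrix (Fin (v (tgt h))) (Fin (v (src h))) ℂ)
  × (∀ k : Fin n, Matrix (Fin (v k)) (Fin (w k)) ℂ)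
  × (∀ k : Fin n, Matrix (Fin (w k)) (Fin (v k)) ℂ)

/-- `ε(h) = 1` for `h ∈ Ω` and `ε(h) = -1` for `h ∈ Ω̄`. -/
def eps (Ω : E → Prop) [DecidablePred Ω] (h : E) : ℂ := if Ω h then 1 else -1

/-- The matrix `B_{h̄}` attached to the reversed edge, recast so that it is a matrix
`V (tgt h) → V (src h)`. -/
def Bbar (src tgt : E → Fin n) (bar : E → E) (v w : Fin n → ℕ)
    (hbs : ∀ h, src (bar h) = tgt h) (hbt : ∀ h, tgt (bar h) = src h)
    (p : Rep src tgt v w) (h : E) : Matrix (Fin (v (src h))) (Fin (v (tgt h))) ℂ :=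
  castM2 v (hbt h) (hbs h) (p.1 (bar h))

/-- The real moment map, componentwise:
`μ_ℝ(B,i,j)_k = (i/2)·[Σ_{in(h)=k} (B_h B_h† − B_{h̄}† B_{h̄}) + i_k i_k† − j_k† j_k]`. -/
def muR [Fintype E] (src tgt : E → Fin n) (bar : E → E) (v w : Fin n → ℕ)
    (hbs : ∀ h, src (bar h) = tgt h) (hbt : ∀ h, tgt (bar h) = src h)
    (p : Rep src tgt v w) (k : Fin n) : Matrix (Fin (v k)) (Fin (v k)) ℂ :=
  (Complex.I / 2) •
    ((∑ h : E, if e : tgt h = k then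
        castM2 v e e
          (p.1 h * (p.1 h)ᴴ -
            (Bbar src tgt bar v w hbs hbt p h)ᴴ * Bbar src tgt bar v w hbs hbt p h)
      else 0)
      + (p.2.1 k * (p.2.1 k)ᴴ - (p.2.2 k)ᴴ * p.2.2 k))

/-- The complex moment map, componentwise:
`μ_ℂ(B,i,j)_k = Σ_{in(h)=k} ε(h)·B_h B_{h̄} + i_k j_k`. -/
def muC [Fintype E] (src tgt : E → Fin n) (bar : E → E) (Ω : E → Prop) [DecidablePred Ω]
    (v w : Fin n → ℕ)
    (hbs : ∀ h, src (bar h) = tgt h) (hbt : ∀ h, tgt (bar h) = src h)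
    (p : Rep src tgt v w) (k : Fin n) : Matrix (Fin (v k)) (Fin (v k)) ℂ :=
  (∑ h : E, if e : tgt h = k then
      eps Ω h • castM2 v e e (p.1 h * Bbar src tgt bar v w hbs hbt p h)
    else 0)
    + p.2.1 k * p.2.2 k

/-- The hyperkähler rotation `HK_ξ(B,i,j) = (B_h − ε(h)·ξ·B_{h̄}†, i_k − ξ·j_k†, j_k + ξ·i_k†)`. -/
def HK (src tgt : E → Fin n) (bar : E → E) (Ω : E → Prop) [DecidablePred Ω]
    (v w : Fin n → ℕ)
    (hbs : ∀ h, src (bar h) = tgt h) (hbt : ∀ h, tgt (bar h) = src h)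
    (ξ : ℂ) (p : Rep src tgt v w) : Rep src tgt v w :=
  ⟨fun h => p.1 h - (eps Ω h * ξ) • (Bbar src tgt bar v w hbs hbt p h)ᴴ,
   fun k => p.2.1 k - ξ • (p.2.2 k)ᴴ,
   fun k => p.2.2 k + ξ • (p.2.1 k)ᴴ⟩

/-- The gauge action `g·(B,i,j) = (g_{in(h)} B_h g_{out(h)}⁻¹, g_k i_k, j_k g_k⁻¹)`. -/
def gauge (src tgt : E → Fin n) (v w : Fin n → ℕ)
    (g : ∀ k : Fin n, Matrix (Fin (v k)) (Fin (v k)) ℂ) (p : Rep src tgt v w) :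
    Rep src tgt v w :=
  ⟨fun h => g (tgt h) * p.1 h * (g (src h))⁻¹,
   fun k => g k * p.2.1 k,
   fun k => p.2.2 k * (g k)⁻¹⟩

/-- The infinitesimal gauge action `l_p(ξ) = (ξ_{in(h)} B_h − B_h ξ_{out(h)}, ξ_k i_k, −j_k ξ_k)`. -/
def lp (src tgt : E → Fin n) (v w : Fin n → ℕ)
    (p : Rep src tgt v w) (ξ : ∀ k : Fin n, Matrix (Fin (v k)) (Fin (v k)) ℂ) :
    Rep src tgt v w :=
  ⟨fun h => ξ (tgt h) * p.1 h - p.1 h * ξ (src h),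
   fun k => ξ k * p.2.1 k,
   fun k => -(p.2.2 k * ξ k)⟩

/-- The adjoint of the infinitesimal gauge action, componentwise:
`l_p^*(q)_k = Σ_{in(h)=k} (A_h B_h† − B_{h̄}† A_{h̄}) + I_k i_k† − j_k† J_k`. -/
def lpStar [Fintype E] (src tgt : E → Fin n) (bar : E → E) (v w : Fin n → ℕ)
    (hbs : ∀ h, src (bar h) = tgt h) (hbt : ∀ h, tgt (bar h) = src h)
    (p q : Rep src tgt v w) (k : Fin n) : Matrix (Fin (v k)) (Fin (v k)) ℂ :=
  (∑ h : E, if e : tgt h = k then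
      castM2 v e e
        (q.1 h * (p.1 h)ᴴ -
          (Bbar src tgt bar v w hbs hbt p h)ᴴ * Bbar src tgt bar v w hbs hbt q h)
    else 0)
    + (q.2.1 k * (p.2.1 k)ᴴ - (p.2.2 k)ᴴ * q.2.2 k)

/-- The hermitian inner product
`⟨q, q′⟩ = Σ_h Tr(A_h A′_h†) + Σ_k Tr(I_k I′_k†) + Σ_k Tr(J_k J′_k†)` on `𝕄`. -/
def innerRep [Fintype E] (src tgt : E → Fin n) (v w : Fin n → ℕ)
    (q q' : Rep src tgt v w) : ℂ :=
  (∑ h : E, (q.1 h * (q'.1 h)ᴴ).trace)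
    + (∑ k : Fin n, (q.2.1 k * (q'.2.1 k)ᴴ).trace)
    + (∑ k : Fin n, (q.2.2 k * (q'.2.2 k)ᴴ).trace)

/-- The complex symplectic form
`ω_ℂ(q, q′) = Σ_h ε(h)·Tr(A_h A′_{h̄}) + Σ_k Tr(I_k J′_k − I′_k J_k)`. -/
def omegaC [Fintype E] (src tgt : E → Fin n) (bar : E → E) (Ω : E → Prop) [DecidablePred Ω]
    (v w : Fin n → ℕ)
    (hbs : ∀ h, src (bar h) = tgt h) (hbt : ∀ h, tgt (bar h) = src h)
    (q q' : Rep src tgt v w) : ℂ :=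
  (∑ h : E, eps Ω h * (q.1 h * Bbar src tgt bar v w hbs hbt q' h).trace)
    + ∑ k : Fin n, ((q.2.1 k * q'.2.2 k).trace - (q'.2.1 k * q.2.2 k).trace)

/-- The scaling action `t∘(B,i,j)`: multiply the `Ω̄`-components and the `j`-components by `t`. -/
def scale (src tgt : E → Fin n) (Ω : E → Prop) [DecidablePred Ω] (v w : Fin n → ℕ)
    (t : ℂ) (p : Rep src tgt v w) : Rep src tgt v w :=
  ⟨fun h => if Ω h then p.1 h else t • p.1 h,
   fun k => p.2.1 k,
   fun k => t • p.2.2 k⟩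

/-- The second complex structure `J(m, m′) = (−(m′)†, m†)` on `𝕄 = 𝕄_Ω ⊕ 𝕄_Ω̄`. -/
def Jmap (src tgt : E → Fin n) (bar : E → E) (Ω : E → Prop) [DecidablePred Ω]
    (v w : Fin n → ℕ)
    (hbs : ∀ h, src (bar h) = tgt h) (hbt : ∀ h, tgt (bar h) = src h)
    (q : Rep src tgt v w) : Rep src tgt v w :=
  ⟨fun h => (-(eps Ω h)) • (Bbar src tgt bar v w hbs hbt q h)ᴴ,
   fun k => -((q.2.2 k)ᴴ),
   fun k => (q.2.1 k)ᴴ⟩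

/-- The point `p_A(ℏ)` of `𝕄`: for `h ∈ Ω` the `h`-component is `B⁰_h + A_h − ℏ·(B⁰_{h̄})†` and
for `h ∈ Ω̄` it is `ℏ⁻¹·(B⁰_h + A_h) + (B⁰_{h̄})†`; the `i`-components are
`i⁰_k + I_k − ℏ·(j⁰_k)†` and the `j`-components are `ℏ⁻¹·(j⁰_k + J_k) + (i⁰_k)†`. -/
def pA (src tgt : E → Fin n) (bar : E → E) (Ω : E → Prop) [DecidablePred Ω]
    (v w : Fin n → ℕ)
    (hbs : ∀ h, src (bar h) = tgt h) (hbt : ∀ h, tgt (bar h) = src h)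
    (p0 A : Rep src tgt v w) (ℏ : ℂ) : Rep src tgt v w :=
  ⟨fun h => if Ω h
      then p0.1 h + A.1 h - ℏ • (Bbar src tgt bar v w hbs hbt p0 h)ᴴ
      else ℏ⁻¹ • (p0.1 h + A.1 h) + (Bbar src tgt bar v w hbs hbt p0 h)ᴴ,
   fun k => p0.2.1 k + A.2.1 k - ℏ • (p0.2.2 k)ᴴ,
   fun k => ℏ⁻¹ • (p0.2.2 k + A.2.2 k) + (p0.2.1 k)ᴴ⟩

/-- The linearization of the real moment map equation:
`ℒ(p,ξ)_k = Σ_{in(h)=k} [B_h(B_h† ξ_{in(h)} − ξ_{out(h)} B_h†) −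
(B_{h̄}† ξ_{out(h)} − ξ_{in(h)} B_{h̄}†) B_{h̄}] + i_k i_k† ξ_k + ξ_k j_k† j_k`. -/
def linL [Fintype E] (src tgt : E → Fin n) (bar : E → E) (v w : Fin n → ℕ)
    (hbs : ∀ h, src (bar h) = tgt h) (hbt : ∀ h, tgt (bar h) = src h)
    (p : Rep src tgt v w) (ξ : ∀ k : Fin n, Matrix (Fin (v k)) (Fin (v k)) ℂ)
    (k : Fin n) : Matrix (Fin (v k)) (Fin (v k)) ℂ :=
  (∑ h : E, if e : tgt h = k then
      castM2 v e e
        (p.1 h * ((p.1 h)ᴴ * ξ (tgt h) - ξ (src h) * (p.1 h)ᴴ)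
          - ((Bbar src tgt bar v w hbs hbt p h)ᴴ * ξ (src h)
              - ξ (tgt h) * (Bbar src tgt bar v w hbs hbt p h)ᴴ)
            * Bbar src tgt bar v w hbs hbt p h)
    else 0)
    + (p.2.1 k * (p.2.1 k)ᴴ * ξ k + ξ k * (p.2.2 k)ᴴ * p.2.2 k)

/-- The product of the matrices of `p` along a list of edges `[h_1, …, h_m]`, as a matrix
`V_a → V_b`; when the list is a path with `a = out(h_1)` and `b = in(h_m)` this is the genuine
composite `B_{h_m} ⋯ B_{h_1}`. -/
def prodAlong (src tgt : E → Fin n) (v w : Fin n → ℕ) (p : Rep src tgt v w) :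
    List E → (a : Fin n) → (b : Fin n) → Matrix (Fin (v b)) (Fin (v a)) ℂ
  | [], a, b => if e : a = b then castM2 v e rfl (1 : Matrix (Fin (v a)) (Fin (v a)) ℂ) else 0
  | (h : E) :: rest, a, b =>
      prodAlong src tgt v w p rest (tgt h) b *
        (if e : src h = a then castM2 v rfl e (p.1 h) else 0)

/-! The rotation `(A, C) ↦ (A - z • Cᴴ, C + z • Aᴴ)` mixes the real moment `A Aᴴ - Cᴴ C` with
the complex moment `A C`; applied edge by edge with `z = ε(h) ξ` and at the framing with `z = ξ`,
this single matrix identity gives the theorem, since `ε(h)` is real with `ε(h)² = 1`. The only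
other ingredient is that the reversed edge of the rotated point is `B_{h̄} + ε(h) ξ B_hᴴ`,
because `ε(h̄) = -ε(h)` and `h̄̄ = h`. -/

theorem rotation_mul_conjTranspose_sub_conjTranspose_mul {α β R : Type*} [Fintype β]
    [CommRing R] [StarRing R] (A : Matrix α β R) (C : Matrix β α R) (z : R) :
    (A - z • Cᴴ) * (A - z • Cᴴ)ᴴ - (C + z • Aᴴ)ᴴ * (C + z • Aᴴ)
      = (1 - z * star z) • (A * Aᴴ - Cᴴ * C) - (2 * star z) • (A * C)
        - (2 * z) • (A * C)ᴴ := by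
  simp only [conjTranspose_sub, conjTranspose_add, conjTranspose_smul,
    conjTranspose_conjTranspose, conjTranspose_mul, Matrix.sub_mul, Matrix.mul_sub,
    Matrix.add_mul, Matrix.mul_add, Matrix.smul_mul, Matrix.mul_smul]
  module

section Casts

variable {v : Fin n → ℕ}

@[simp]
theorem castM2_rfl {a b : Fin n} (M : Matrix (Fin (v a)) (Fin (v b)) ℂ) :
    castM2 v rfl rfl M = M := by
  simp [castM2]

theorem castM2_sub {a b a' b' : Fin n} (ea : a = a') (eb : b = b')
    (M N : Matrix (Fin (v a)) (Fin (v b)) ℂ) :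
    castM2 v ea eb (M - N) = castM2 v ea eb M - castM2 v ea eb N := by
  subst ea eb; simp

theorem castM2_smul {a b a' b' : Fin n} (ea : a = a') (eb : b = b') (c : ℂ)
    (M : Matrix (Fin (v a)) (Fin (v b)) ℂ) :
    castM2 v ea eb (c • M) = c • castM2 v ea eb M := by
  subst ea eb; simp

theorem conjTranspose_castM2 {a b a' b' : Fin n} (ea : a = a') (eb : b = b')
    (M : Matrix (Fin (v a)) (Fin (v b)) ℂ) :
    (castM2 v ea eb M)ᴴ = castM2 v eb ea Mᴴ := by
  subst ea eb; simp

theorem castM2_castM2 {a b a' b' a'' b'' : Fin n} (ea : a = a') (eb : b = b')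
    (ea' : a' = a'') (eb' : b' = b'') (M : Matrix (Fin (v a)) (Fin (v b)) ℂ) :
    castM2 v ea' eb' (castM2 v ea eb M) = castM2 v (ea.trans ea') (eb.trans eb') M := by
  subst ea eb ea' eb'; simp

theorem castM2_apply_congr {ι : Type*} {s t : ι → Fin n}
    (F : ∀ i, Matrix (Fin (v (s i))) (Fin (v (t i))) ℂ) {i j : ι} (hij : i = j)
    (es : s i = s j) (et : t i = t j) : castM2 v es et (F i) = F j := by
  subst hij; simp

end Casts

section Signs

variable (Ω : E → Prop) [DecidablePred Ω]

@[simp]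
theorem star_eps (h : E) : star (eps Ω h) = eps Ω h := by
  unfold eps; split_ifs <;> simp

@[simp]
theorem eps_mul_self (h : E) : eps Ω h * eps Ω h = 1 := by
  unfold eps; split_ifs <;> simp

theorem eps_bar {bar : E → E} (hor : ∀ h, Ω (bar h) ↔ ¬ Ω h) (h : E) :
    eps Ω (bar h) = -eps Ω h := by
  by_cases hh : Ω h <;> simp [eps, hor, hh]

end Signs

section MomentMaps

variable (src tgt : E → Fin n) (bar : E → E) (Ω : E → Prop) [DecidablePred Ω]
  (v w : Fin n → ℕ) (hbs : ∀ h, src (bar h) = tgt h) (hbt : ∀ h, tgt (bar h) = src h)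

def muREdge (p : Rep src tgt v w) (k : Fin n) (h : E) : Matrix (Fin (v k)) (Fin (v k)) ℂ :=
  if e : tgt h = k then
    castM2 v e e
      (p.1 h * (p.1 h)ᴴ - (Bbar src tgt bar v w hbs hbt p h)ᴴ * Bbar src tgt bar v w hbs hbt p h)
  else 0

def muCEdge (p : Rep src tgt v w) (k : Fin n) (h : E) : Matrix (Fin (v k)) (Fin (v k)) ℂ :=
  if e : tgt h = k then eps Ω h • castM2 v e e (p.1 h * Bbar src tgt bar v w hbs hbt p h)
  else 0

theorem muR_eq_sum [Fintype E] (p : Rep src tgt v w) (k : Fin n) :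
    muR src tgt bar v w hbs hbt p k
      = (Complex.I / 2) • (∑ h, muREdge src tgt bar v w hbs hbt p k h
          + (p.2.1 k * (p.2.1 k)ᴴ - (p.2.2 k)ᴴ * p.2.2 k)) :=
  rfl

theorem muC_eq_sum [Fintype E] (p : Rep src tgt v w) (k : Fin n) :
    muC src tgt bar Ω v w hbs hbt p k
      = ∑ h, muCEdge src tgt bar Ω v w hbs hbt p k h + p.2.1 k * p.2.2 k :=
  rfl

theorem Bbar_HK (hinv : ∀ h, bar (bar h) = h) (hor : ∀ h, Ω (bar h) ↔ ¬ Ω h)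
    (ξ : ℂ) (q : Rep src tgt v w) (h : E) :
    Bbar src tgt bar v w hbs hbt (HK src tgt bar Ω v w hbs hbt ξ q) h
      = Bbar src tgt bar v w hbs hbt q h + (eps Ω h * ξ) • (q.1 h)ᴴ := by
  change castM2 v (hbt h) (hbs h) (q.1 (bar h) - (eps Ω (bar h) * ξ) •
      (castM2 v (hbt (bar h)) (hbs (bar h)) (q.1 (bar (bar h))))ᴴ) = _
  rw [castM2_sub, castM2_smul, conjTranspose_castM2, castM2_castM2,
    castM2_apply_congr (fun h => (q.1 h)ᴴ) (hinv h), eps_bar Ω hor, neg_mul, neg_smul,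
    sub_neg_eq_add]
  rfl

theorem muREdge_HK (hinv : ∀ h, bar (bar h) = h) (hor : ∀ h, Ω (bar h) ↔ ¬ Ω h)
    (ξ : ℂ) (q : Rep src tgt v w) (k : Fin n) (h : E) :
    muREdge src tgt bar v w hbs hbt (HK src tgt bar Ω v w hbs hbt ξ q) k h
      = (1 - ξ * star ξ) • muREdge src tgt bar v w hbs hbt q k h
        - (2 * star ξ) • muCEdge src tgt bar Ω v w hbs hbt q k h
        - (2 * ξ) • (muCEdge src tgt bar Ω v w hbs hbt q k h)ᴴ := by
  unfold muREdge muCEdge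
  split_ifs with e
  · subst e
    have hB : (HK src tgt bar Ω v w hbs hbt ξ q).1 h
        = q.1 h - (eps Ω h * ξ) • (Bbar src tgt bar v w hbs hbt q h)ᴴ := rfl
    have hz : eps Ω h * ξ * star (eps Ω h * ξ) = ξ * star ξ := by
      rw [star_mul', star_eps, mul_mul_mul_comm, eps_mul_self, one_mul]
    simp only [castM2_rfl]
    rw [hB, Bbar_HK src tgt bar Ω v w hbs hbt hinv hor,
      rotation_mul_conjTranspose_sub_conjTranspose_mul, hz]
    simp only [star_mul', star_eps, conjTranspose_smul, smul_smul]
    module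
  · simp

end MomentMaps

theorem muR_HK_general {n : ℕ} {E : Type*} [Fintype E]
    (src tgt : E → Fin n) (bar : E → E) (Ω : E → Prop) [DecidablePred Ω]
    (v w : Fin n → ℕ)
    (hinv : ∀ h, bar (bar h) = h)
    (hbs : ∀ h, src (bar h) = tgt h) (hbt : ∀ h, tgt (bar h) = src h)
    (hor : ∀ h, Ω (bar h) ↔ ¬ Ω h)
    (q : Rep src tgt v w) (ξ : ℂ) (k : Fin n) :
    muR src tgt bar v w hbs hbt (HK src tgt bar Ω v w hbs hbt ξ q) k
      = ((1 : ℂ) - (‖ξ‖ : ℂ) ^ 2) • muR src tgt bar v w hbs hbt q k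
        - (Complex.I * (starRingEnd ℂ) ξ) • muC src tgt bar Ω v w hbs hbt q k
        - (Complex.I * ξ) • (muC src tgt bar Ω v w hbs hbt q k)ᴴ := by
  have hnorm : (‖ξ‖ : ℂ) ^ 2 = ξ * star ξ := (Complex.mul_conj' ξ).symm
  have hi : (HK src tgt bar Ω v w hbs hbt ξ q).2.1 k = q.2.1 k - ξ • (q.2.2 k)ᴴ := rfl
  have hj : (HK src tgt bar Ω v w hbs hbt ξ q).2.2 k = q.2.2 k + ξ • (q.2.1 k)ᴴ := rfl
  rw [muR_eq_sum, muR_eq_sum, muC_eq_sum, hi, hj,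
    rotation_mul_conjTranspose_sub_conjTranspose_mul]
  simp only [muREdge_HK src tgt bar Ω v w hbs hbt hinv hor, Finset.sum_sub_distrib,
    ← Finset.smul_sum, ← conjTranspose_sum, hnorm, conjTranspose_add, Complex.star_def]
  module

/-- `μ_ℝ(HK_ξ(q))_k = (1 − |ξ|²)·μ_ℝ(q)_k − i·conj(ξ)·μ_ℂ(q)_k − i·ξ·(μ_ℂ(q)_k)†`. -/
theorem muR_HK {n : ℕ} {E : Type*} [Fintype E]
    (src tgt : E → Fin n) (bar : E → E) (Ω : E → Prop) [DecidablePred Ω]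
    (v w : Fin n → ℕ)
    (hloop : ∀ h, src h ≠ tgt h)
    (hinv : ∀ h, bar (bar h) = h) (hfree : ∀ h, bar h ≠ h)
    (hbs : ∀ h, src (bar h) = tgt h) (hbt : ∀ h, tgt (bar h) = src h)
    (hor : ∀ h, Ω (bar h) ↔ ¬ Ω h)
    (q : Rep src tgt v w) (ξ : ℂ) (k : Fin n) :
    muR src tgt bar v w hbs hbt (HK src tgt bar Ω v w hbs hbt ξ q) k
      = ((1 : ℂ) - (‖ξ‖ : ℂ) ^ 2) • muR src tgt bar v w hbs hbt q k
        - (Complex.I * (starRingEnd ℂ) ξ) • muC src tgt bar Ω v w hbs hbt q k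
        - (Complex.I * ξ) • (muC src tgt bar Ω v w hbs hbt q k)ᴴ :=
  muR_HK_general src tgt bar Ω v w hinv hbs hbt hor q ξ k

end

end QuiverCL
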